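/- (Posterior rate from forward-map rate) Assume |G(u) − G^N(u)| ≤ M(‖u‖_X)ψ(N) for all u with ψ(N) → 0, exp(M(‖u‖_X)) ∈ L¹_{μ_0}, and G, G^N uniformly bounded. Then for the Gaussian-potential posteriors, d_Hell(μ, μ^N) ≤ Cψ(N) for all sufficiently large N. -/

import Mathlib

/-!
Since `G` and `Gᴺ` are bounded by `Mb`, both potentials take values in `[0, K]` with
`K = (‖y‖ + Mb)² / (2γ²)`, so both normalising constants are at least `exp (-K)`, uniformly in `N`.
Splitting
`√(Z⁻¹ e^{-Φ}) - √(Zᴺ⁻¹ e^{-Φᴺ}) = Z^{-1/2} (e^{-Φ/2} - e^{-Φᴺ/2}) + (Z^{-1/2} - Zᴺ^{-1/2}) e^{-Φᴺ/2}`,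
the first term is controlled pointwise by `|Φ - Φᴺ| ≤ L ψ(N) M(‖u‖)` and the second by
`|Z - Zᴺ| ≤ ∫ |Φ - Φᴺ| dμ₀`. As `M ≤ e^M` and `M² ≤ 2 e^M`, integrating against `μ₀` bounds the
squared Hellinger distance by a constant times `ψ(N)²`, for every `N`.
-/

open MeasureTheory Filter Real

lemma abs_exp_neg_sub_exp_neg_le {s t : ℝ} (hs : 0 ≤ s) (ht : 0 ≤ t) :
    |exp (-s) - exp (-t)| ≤ |s - t| := by
  wlog hts : t ≤ s generalizing s t
  · rw [abs_sub_comm, abs_sub_comm s]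
    exact this ht hs (le_of_not_ge hts)
  have hst : exp (-(s - t)) ≤ 1 := exp_le_one_iff.2 (by linarith)
  rw [abs_of_nonpos (sub_nonpos.2 (exp_le_exp.2 (by linarith))), abs_of_nonneg (by linarith),
    neg_sub]
  calc exp (-t) - exp (-s) = exp (-t) * (1 - exp (-(s - t))) := by
        rw [mul_sub, ← exp_add]; ring_nf
    _ ≤ 1 * (1 - exp (-(s - t))) := by
        gcongr
        exact exp_le_one_iff.2 (by linarith)
    _ ≤ s - t := by linarith [add_one_le_exp (-(s - t))]

lemma sq_le_two_mul_exp {x : ℝ} (hx : 0 ≤ x) : x ^ 2 ≤ 2 * exp x := by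
  have h := pow_div_factorial_le_exp x hx 2
  norm_num [Nat.factorial] at h
  linarith

lemma sq_inv_sqrt_sub_inv_sqrt_le {m p q : ℝ} (hm : 0 < m) (hp : m ≤ p) (hq : m ≤ q) :
    ((√p)⁻¹ - (√q)⁻¹) ^ 2 ≤ (p - q) ^ 2 / (2 * m ^ 3) := by
  have hp0 : 0 < p := hm.trans_le hp
  have hq0 : 0 < q := hm.trans_le hq
  have ha : √p ^ 2 = p := sq_sqrt hp0.le
  have hb : √q ^ 2 = q := sq_sqrt hq0.le
  have ha0 : 0 < √p := sqrt_pos.2 hp0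
  have hb0 : 0 < √q := sqrt_pos.2 hq0
  have hsplit : ((√p)⁻¹ - (√q)⁻¹) ^ 2
      = (√p ^ 2 - √q ^ 2) ^ 2 / ((√p + √q) ^ 2 * (√p ^ 2 * √q ^ 2)) := by
    field_simp; ring
  have hsum : 2 * m ≤ (√p + √q) ^ 2 := by nlinarith
  have hprod : m ^ 2 ≤ p * q := by nlinarith
  rw [hsplit, ha, hb]
  refine div_le_div_of_nonneg_left (sq_nonneg _) (by positivity) ?_
  calc 2 * m ^ 3 = 2 * m * m ^ 2 := by ring
    _ ≤ (√p + √q) ^ 2 * (p * q) := by gcongr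

lemma sq_sqrt_inv_mul_exp_neg_sub_le {m p q s t : ℝ} (hm : 0 < m) (hp : m ≤ p) (hq : m ≤ q)
    (hs : 0 ≤ s) (ht : 0 ≤ t) :
    (√(p⁻¹ * exp (-s)) - √(q⁻¹ * exp (-t))) ^ 2 ≤ (s - t) ^ 2 / (2 * m) + (p - q) ^ 2 / m ^ 3 := by
  have hp0 : 0 < p := hm.trans_le hp
  rw [sqrt_mul (inv_nonneg.2 hp0.le), sqrt_mul (inv_nonneg.2 (hm.trans_le hq).le), sqrt_inv,
    sqrt_inv, ← exp_half, ← exp_half]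
  have hP : (√p)⁻¹ ^ 2 ≤ m⁻¹ := by rw [inv_pow, sq_sqrt hp0.le]; exact inv_anti₀ hm hp
  have hAB : (exp (-s / 2) - exp (-t / 2)) ^ 2 ≤ ((s - t) / 2) ^ 2 := by
    rw [sq_le_sq, neg_div, neg_div, sub_div]
    exact abs_exp_neg_sub_exp_neg_le (by positivity) (by positivity)
  have hB : exp (-t / 2) ^ 2 ≤ 1 := pow_le_one₀ (exp_pos _).le (exp_le_one_iff.2 (by linarith))
  have hPQ := sq_inv_sqrt_sub_inv_sqrt_le hm hp hq
  set P := (√p)⁻¹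
  set Q := (√q)⁻¹
  set A := exp (-s / 2)
  set B := exp (-t / 2)
  calc (P * A - Q * B) ^ 2 = (P * (A - B) + (P - Q) * B) ^ 2 := by ring
    _ ≤ 2 * ((P * (A - B)) ^ 2 + ((P - Q) * B) ^ 2) := add_sq_le
    _ = 2 * (P ^ 2 * (A - B) ^ 2 + (P - Q) ^ 2 * B ^ 2) := by ring
    _ ≤ 2 * (m⁻¹ * ((s - t) / 2) ^ 2 + (p - q) ^ 2 / (2 * m ^ 3) * 1) := by gcongr
    _ = (s - t) ^ 2 / (2 * m) + (p - q) ^ 2 / m ^ 3 := by field_simp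

section GibbsMeasures

variable {X : Type*} [MeasurableSpace X] {μ : Measure X} {f g : X → ℝ}

lemma integrable_exp_neg [IsFiniteMeasure μ] (hf : Measurable f) (hf0 : ∀ u, 0 ≤ f u) :
    Integrable (fun u => exp (-f u)) μ :=
  Integrable.of_bound hf.neg.exp.aestronglyMeasurable 1 <| ae_of_all _ fun u => by
    rw [norm_of_nonneg (exp_pos _).le]
    exact exp_le_one_iff.2 (by linarith [hf0 u])

lemma exp_neg_le_integral_exp_neg [IsProbabilityMeasure μ] (hf : Measurable f)
    (hf0 : ∀ u, 0 ≤ f u) {K : ℝ} (hfK : ∀ u, f u ≤ K) :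
    exp (-K) ≤ ∫ u, exp (-f u) ∂μ := by
  calc exp (-K) = ∫ _, exp (-K) ∂μ := by simp
    _ ≤ ∫ u, exp (-f u) ∂μ :=
      integral_mono (integrable_const _) (integrable_exp_neg hf hf0)
        fun u => exp_le_exp.2 (neg_le_neg (hfK u))

lemma abs_integral_exp_neg_sub_le [IsFiniteMeasure μ] (hf : Measurable f) (hg : Measurable g)
    (hf0 : ∀ u, 0 ≤ f u) (hg0 : ∀ u, 0 ≤ g u) {h : X → ℝ} (hh : Integrable h μ)
    (hfg : ∀ u, |f u - g u| ≤ h u) :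
    |∫ u, exp (-f u) ∂μ - ∫ u, exp (-g u) ∂μ| ≤ ∫ u, h u ∂μ := by
  rw [← integral_sub (integrable_exp_neg hf hf0) (integrable_exp_neg hg hg0)]
  exact norm_integral_le_of_norm_le hh <| ae_of_all _ fun u =>
    (norm_eq_abs _).trans_le ((abs_exp_neg_sub_exp_neg_le (hf0 u) (hg0 u)).trans (hfg u))

lemma integral_sq_sqrt_gibbs_density_sub_le [IsProbabilityMeasure μ] (hf : Measurable f)
    (hg : Measurable g) (hf0 : ∀ u, 0 ≤ f u) (hg0 : ∀ u, 0 ≤ g u) {K : ℝ}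
    (hfK : ∀ u, f u ≤ K) (hgK : ∀ u, g u ≤ K) {m : X → ℝ} (hm0 : ∀ u, 0 ≤ m u)
    (hm : Integrable (fun u => exp (m u)) μ) {δ : ℝ} (hδ : 0 ≤ δ)
    (hfg : ∀ u, |f u - g u| ≤ δ * m u) :
    ∫ u, (√((∫ v, exp (-f v) ∂μ)⁻¹ * exp (-f u))
        - √((∫ v, exp (-g v) ∂μ)⁻¹ * exp (-g u))) ^ 2 ∂μ
      ≤ δ ^ 2 * (exp K * ∫ u, exp (m u) ∂μ + exp (3 * K) * (∫ u, exp (m u) ∂μ) ^ 2) := by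
  set B := ∫ u, exp (m u) ∂μ
  set κ := exp (-K)
  have hκ : 0 < κ := exp_pos _
  have hZdiff : |∫ u, exp (-f u) ∂μ - ∫ u, exp (-g u) ∂μ| ≤ δ * B := by
    rw [← integral_const_mul]
    refine abs_integral_exp_neg_sub_le hf hg hf0 hg0 (hm.const_mul δ) fun u => ?_
    exact (hfg u).trans (by gcongr; linarith [add_one_le_exp (m u)])
  have hpt : ∀ u, (f u - g u) ^ 2 ≤ 2 * δ ^ 2 * exp (m u) := fun u => by
    calc (f u - g u) ^ 2 ≤ (δ * m u) ^ 2 := sq_le_sq.2 ((hfg u).trans (le_abs_self _))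
      _ ≤ 2 * δ ^ 2 * exp (m u) := by
          rw [mul_pow]; nlinarith [sq_le_two_mul_exp (hm0 u), sq_nonneg δ]
  have hZsq : (∫ u, exp (-f u) ∂μ - ∫ u, exp (-g u) ∂μ) ^ 2 ≤ (δ * B) ^ 2 :=
    sq_le_sq.2 (hZdiff.trans (le_abs_self _))
  calc _ ≤ ∫ u, (2 * δ ^ 2 * exp (m u) / (2 * κ)
        + (∫ v, exp (-f v) ∂μ - ∫ v, exp (-g v) ∂μ) ^ 2 / κ ^ 3) ∂μ := by
        refine integral_mono_of_nonneg (ae_of_all _ fun _ => sq_nonneg _)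
          (((hm.const_mul _).div_const _).add (integrable_const _)) (ae_of_all _ fun u => ?_)
        refine (sq_sqrt_inv_mul_exp_neg_sub_le hκ (exp_neg_le_integral_exp_neg hf hf0 hfK)
          (exp_neg_le_integral_exp_neg hg hg0 hgK) (hf0 u) (hg0 u)).trans ?_
        dsimp only
        gcongr
        exact hpt u
    _ ≤ 2 * δ ^ 2 * B / (2 * κ) + (δ * B) ^ 2 / κ ^ 3 := by
        rw [integral_add ((hm.const_mul _).div_const _) (integrable_const _), integral_div,
          integral_const_mul, integral_const]
        simp only [probReal_univ, one_smul]
        gcongr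
    _ = δ ^ 2 * (exp K * B + exp (3 * K) * B ^ 2) := by
        simp only [κ, exp_neg, inv_pow, ← exp_nat_mul, Nat.cast_ofNat]
        field_simp

end GibbsMeasures

section DataMisfit

variable {E : Type*} [SeminormedAddCommGroup E] {y a b : E} {r c : ℝ}

lemma norm_sub_sq_div_le (ha : ‖a‖ ≤ r) (hc : 0 ≤ c) : ‖y - a‖ ^ 2 / c ≤ (‖y‖ + r) ^ 2 / c := by
  gcongr
  exact (norm_sub_le y a).trans (by linarith)

lemma abs_norm_sub_sq_div_sub_le (ha : ‖a‖ ≤ r) (hb : ‖b‖ ≤ r) (hc : 0 ≤ c) :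
    |‖y - a‖ ^ 2 / c - ‖y - b‖ ^ 2 / c| ≤ 2 * (‖y‖ + r) / c * ‖a - b‖ := by
  have hdist : |‖y - a‖ - ‖y - b‖| ≤ ‖a - b‖ := by
    simpa only [sub_sub_sub_cancel_left, norm_sub_rev b a] using abs_norm_sub_norm_le (y - a) (y - b)
  have hsum : |‖y - a‖ + ‖y - b‖| ≤ 2 * (‖y‖ + r) := by
    rw [abs_of_nonneg (by positivity)]
    linarith [norm_sub_le y a, norm_sub_le y b]
  rw [← sub_div, abs_div, abs_of_nonneg hc, sq_sub_sq, abs_mul, div_mul_eq_mul_div]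
  gcongr
  linarith [norm_nonneg a, norm_nonneg y]

end DataMisfit

theorem posterior_rate_from_forward_rate_general
    {X : Type*} [NormedAddCommGroup X] [MeasurableSpace X]
    (μ0 : Measure X) [IsProbabilityMeasure μ0]
    {J : ℕ} (y : EuclideanSpace ℝ (Fin J)) (γ Mb : ℝ)
    (G : X → EuclideanSpace ℝ (Fin J)) (GN : ℕ → X → EuclideanSpace ℝ (Fin J))
    (hGm : Measurable G) (hGNm : ∀ N, Measurable (GN N))
    (hGb : ∀ u, ‖G u‖ ≤ Mb) (hGNb : ∀ N u, ‖GN N u‖ ≤ Mb)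
    (M : ℝ → ℝ) (hMpos : ∀ r, 0 ≤ M r)
    (ψ : ℕ → ℝ) (hψpos : ∀ N, 0 ≤ ψ N)
    (hrate : ∀ (N : ℕ) (u : X), ‖G u - GN N u‖ ≤ M ‖u‖ * ψ N)
    (hint : Integrable (fun u => Real.exp (M ‖u‖)) μ0)
    (Φ : X → ℝ) (hΦ : Φ = fun u => ‖y - G u‖^2 / (2 * γ^2))
    (ΦN : ℕ → X → ℝ) (hΦN : ΦN = fun N u => ‖y - GN N u‖^2 / (2 * γ^2))
    (Z : ℝ) (hZ : Z = ∫ u, Real.exp (-Φ u) ∂μ0)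
    (ZN : ℕ → ℝ) (hZN : ZN = fun N => ∫ u, Real.exp (-ΦN N u) ∂μ0) :
    ∃ C : ℝ, 0 < C ∧ ∃ N0 : ℕ, ∀ N ≥ N0,
      Real.sqrt ((1/2) * ∫ u,
        (Real.sqrt (Z⁻¹ * Real.exp (-Φ u))
          - Real.sqrt ((ZN N)⁻¹ * Real.exp (-ΦN N u)))^2 ∂μ0) ≤ C * ψ N := by
  subst hΦ hΦN hZ hZN
  beta_reduce
  obtain ⟨u0⟩ := nonempty_of_isProbabilityMeasure μ0
  have hc : 0 ≤ 2 * γ ^ 2 := by positivity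
  set L := 2 * (‖y‖ + Mb) / (2 * γ ^ 2)
  set K := (‖y‖ + Mb) ^ 2 / (2 * γ ^ 2)
  set B := ∫ u, exp (M ‖u‖) ∂μ0
  set A := L ^ 2 * (exp K * B + exp (3 * K) * B ^ 2)
  have hL : 0 ≤ L := by have := (norm_nonneg _).trans (hGb u0); positivity
  refine ⟨√(A / 2) + 1, by positivity, 0, fun N _ => ?_⟩
  have hH := integral_sq_sqrt_gibbs_density_sub_le (μ := μ0)
    (f := fun u => ‖y - G u‖ ^ 2 / (2 * γ ^ 2)) (g := fun u => ‖y - GN N u‖ ^ 2 / (2 * γ ^ 2)) (by fun_prop) (by fun_prop)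
    (fun u => by positivity) (fun u => by positivity) (fun u => norm_sub_sq_div_le (hGb u) hc)
    (fun u => norm_sub_sq_div_le (hGNb N u) hc) (fun u => hMpos ‖u‖) hint
    (mul_nonneg hL (hψpos N)) fun u =>
      (abs_norm_sub_sq_div_sub_le (hGb u) (hGNb N u) hc).trans <| by
        rw [mul_assoc, mul_comm (ψ N)]; gcongr; exact hrate N u
  calc _ ≤ √(ψ N ^ 2 * (A / 2)) := sqrt_le_sqrt (by linarith)
    _ = √(A / 2) * ψ N := by rw [sqrt_mul (sq_nonneg _), sqrt_sq (hψpos N), mul_comm]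
    _ ≤ (√(A / 2) + 1) * ψ N := mul_le_mul_of_nonneg_right (by linarith) (hψpos N)

/-- Posterior rate from a forward-map rate: if `|G(u) − Gᴺ(u)| ≤ M(‖u‖) ψ(N)` with
`ψ(N) → 0` and `exp(M(‖u‖))` is `μ0`-integrable, then the Hellinger distance between
the exact and approximate Gaussian-potential posteriors is `≤ C ψ(N)` for all large `N`. -/
theorem posterior_rate_from_forward_rate
    {X : Type*} [NormedAddCommGroup X] [MeasurableSpace X] [BorelSpace X]
    (μ0 : Measure X) [IsProbabilityMeasure μ0]
    {J : ℕ} (y : EuclideanSpace ℝ (Fin J)) (γ Mb : ℝ) (hγ : 0 < γ)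
    (G : X → EuclideanSpace ℝ (Fin J)) (GN : ℕ → X → EuclideanSpace ℝ (Fin J))
    (hGm : Measurable G) (hGNm : ∀ N, Measurable (GN N))
    (hGb : ∀ u, ‖G u‖ ≤ Mb) (hGNb : ∀ N u, ‖GN N u‖ ≤ Mb)
    (M : ℝ → ℝ) (hMm : Measurable M) (hMpos : ∀ r, 0 ≤ M r)
    (ψ : ℕ → ℝ) (hψpos : ∀ N, 0 ≤ ψ N) (hψ : Tendsto ψ atTop (nhds 0))
    (hrate : ∀ (N : ℕ) (u : X), ‖G u - GN N u‖ ≤ M ‖u‖ * ψ N)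
    (hint : Integrable (fun u => Real.exp (M ‖u‖)) μ0)
    (Φ : X → ℝ) (hΦ : Φ = fun u => ‖y - G u‖^2 / (2 * γ^2))
    (ΦN : ℕ → X → ℝ) (hΦN : ΦN = fun N u => ‖y - GN N u‖^2 / (2 * γ^2))
    (Z : ℝ) (hZ : Z = ∫ u, Real.exp (-Φ u) ∂μ0) (hZpos : 0 < Z)
    (ZN : ℕ → ℝ) (hZN : ZN = fun N => ∫ u, Real.exp (-ΦN N u) ∂μ0)
    (hZNpos : ∀ N, 0 < ZN N) :
    ∃ C : ℝ, 0 < C ∧ ∃ N0 : ℕ, ∀ N ≥ N0,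
      Real.sqrt ((1/2) * ∫ u,
        (Real.sqrt (Z⁻¹ * Real.exp (-Φ u))
          - Real.sqrt ((ZN N)⁻¹ * Real.exp (-ΦN N u)))^2 ∂μ0) ≤ C * ψ N :=
  posterior_rate_from_forward_rate_general μ0 y γ Mb G GN hGm hGNm hGb hGNb M hMpos ψ hψpos hrate
    hint Φ hΦ ΦN hΦN Z hZ ZN hZN
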